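/- For $x \le x'$, the Brownian bridges satisfy the pathwise comparison $X^{t,x}_s \le X^{t,x'}_s$ for all $s \in [t,1]$, almost surely (using the same driving Brownian motion), and consequently the normalized value function $\tilde v(t,x) := e^{-x} v(t,x)$ is non-increasing in $x$. -/

import Mathlib

open MeasureTheory ProbabilityTheory Real Set Filter

noncomputable section

/-- A standard one-dimensional Brownian motion on `[0, ∞)`. -/
structure IsBrownianMotion {Ω : Type*} [MeasurableSpace Ω] (μ : Measure Ω)
    (W : ℝ → Ω → ℝ) : Prop where
  isProb : IsProbabilityMeasure μ
  meas : ∀ t : ℝ, Measurable (W t)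
  init : ∀ ω, W 0 ω = 0
  cont : ∀ ω, Continuous fun t => W t ω
  incr_law : ∀ s t : ℝ, 0 ≤ s → s ≤ t →
    Measure.map (fun ω => W t ω - W s ω) μ = gaussianReal 0 (Real.toNNReal (t - s))
  indep_incr : ∀ n : ℕ, ∀ u : ℕ → ℝ, Monotone u → 0 ≤ u 0 →
    iIndepFun
      (fun i : Fin n => fun ω => W (u (i + 1)) ω - W (u i) ω) μ

variable {Ω : Type*} [MeasurableSpace Ω]

/-- The Wiener integral `∫_t^s dW_u/(1-u)`, defined pathwise via integration by parts. -/
def bridgeInt (W : ℝ → Ω → ℝ) (t s : ℝ) (ω : Ω) : ℝ :=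
  W s ω / (1 - s) - W t ω / (1 - t) - ∫ u in t..s, W u ω / (1 - u) ^ 2

/-- The Brownian bridge started from `x` at time `t` and pinned at `0` at time `1`:
`X^{t,x}_s = (1-s) (x/(1-t) + ∫_t^s dW_u/(1-u))`. -/
def bridge (W : ℝ → Ω → ℝ) (t x s : ℝ) (ω : Ω) : ℝ :=
  (1 - s) * (x / (1 - t) + bridgeInt W t s ω)

/-- The process `Z^{t,x}_s = ((1-s)/(1-t)) x + sqrt((1-s)/(1-t)) W_{s-t}`. -/
def Zproc (W : ℝ → Ω → ℝ) (t x s : ℝ) (ω : Ω) : ℝ :=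
  (1 - s) / (1 - t) * x + Real.sqrt ((1 - s) / (1 - t)) * W (s - t) ω

/-- The natural filtration of `W`, as a σ-algebra at time `s`. -/
def natSigma (W : ℝ → Ω → ℝ) (s : ℝ) : MeasurableSpace Ω :=
  ⨆ u ∈ Set.Iic s, MeasurableSpace.comap (W u) inferInstance

/-- `τ` is a stopping time of the natural filtration of `W`. -/
def IsStoppingTimeFor (W : ℝ → Ω → ℝ) (τ : Ω → ℝ) : Prop :=
  ∀ s : ℝ, MeasurableSet[natSigma W s] {ω | τ ω ≤ s}

/-- The value function `v(t,x) = sup_{0 ≤ τ ≤ 1-t} E[exp(Z^{t,x}_{t+τ})]`, the supremum being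
taken over stopping times `τ` of the (time-shifted) natural filtration of `W`. -/
def value (μ : Measure Ω) (W : ℝ → Ω → ℝ) (t x : ℝ) : ℝ :=
  sSup {r : ℝ | ∃ τ : Ω → ℝ, IsStoppingTimeFor W (fun ω => t + τ ω) ∧
    (∀ ω, τ ω ∈ Set.Icc 0 (1 - t)) ∧ r = ∫ ω, Real.exp (Zproc W t x (t + τ ω) ω) ∂μ}

/-- The optimal stopping boundary `b(t) = sup{x : v(t,x) > e^x}`, with `b(1) = 0`. -/
def boundary (μ : Measure Ω) (W : ℝ → Ω → ℝ) (t : ℝ) : ℝ :=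
  if t = 1 then 0 else sSup {x : ℝ | Real.exp x < value μ W t x}

/-- `S_1 = sup_{0 ≤ s ≤ 1} |W_s|`. -/
def supAbsW (W : ℝ → Ω → ℝ) (ω : Ω) : ℝ := ⨆ s : Set.Icc (0:ℝ) 1, |W s ω|

/-!
The bridge `X^{t,x}_s` is affine in `x` with slope `(1-s)/(1-t) ∈ [0, 1]`, so the comparison holds
pathwise. So is `Z^{t,x}_s`: for a fixed stopping rule `τ`, raising `x` to `x'` multiplies the
payoff integrand by a factor between `1` and `e^{x'-x}`. Taking suprema over `τ` gives
`v(t,x') ≤ e^{x'-x} v(t,x)`, which is the antitonicity of `e^{-x} v(t,x)`. The lower bound `1` on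
the factor matters only for unbounded payoffs: it makes both suprema unbounded, hence both `0`.
-/

section IntegralBounds

variable {α : Type*} [MeasurableSpace α] {μ : Measure α} {h f : α → ℝ} {K : ℝ}

theorem integrable_mul_iff_of_one_le_of_le (hh : AEStronglyMeasurable h μ)
    (h_one : ∀ a, 1 ≤ h a) (h_le : ∀ a, h a ≤ K) :
    Integrable (fun a => h a * f a) μ ↔ Integrable f μ := by
  have h_pos : ∀ a, 0 < h a := fun a => one_pos.trans_le (h_one a)
  constructor
  · intro hhf
    have hinv : Integrable (fun a => (h a)⁻¹ * (h a * f a)) μ :=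
      hhf.bdd_mul (c := 1) hh.aemeasurable.inv.aestronglyMeasurable <| .of_forall fun a => by
        rw [norm_inv, Real.norm_of_nonneg (h_pos a).le]
        exact inv_le_one_of_one_le₀ (h_one a)
    exact hinv.congr (.of_forall fun a => inv_mul_cancel_left₀ (h_pos a).ne' (f a))
  · intro hf
    refine hf.bdd_mul (c := K) hh (.of_forall fun a => ?_)
    rw [Real.norm_of_nonneg (h_pos a).le]
    exact h_le a

theorem integral_le_integral_mul_of_one_le (hh : AEStronglyMeasurable h μ)
    (h_one : ∀ a, 1 ≤ h a) (h_le : ∀ a, h a ≤ K) (hf : ∀ a, 0 ≤ f a) :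
    ∫ a, f a ∂μ ≤ ∫ a, h a * f a ∂μ := by
  by_cases hfi : Integrable f μ
  · refine integral_mono hfi ((integrable_mul_iff_of_one_le_of_le hh h_one h_le).2 hfi)
      fun a => ?_
    exact le_mul_of_one_le_left (hf a) (h_one a)
  · rw [integral_undef hfi,
      integral_undef (by rwa [integrable_mul_iff_of_one_le_of_le hh h_one h_le])]

theorem integral_mul_le_mul_integral (hh : AEStronglyMeasurable h μ)
    (h_one : ∀ a, 1 ≤ h a) (h_le : ∀ a, h a ≤ K) (hf : ∀ a, 0 ≤ f a) :
    ∫ a, h a * f a ∂μ ≤ K * ∫ a, f a ∂μ := by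
  by_cases hfi : Integrable f μ
  · rw [← integral_const_mul]
    refine integral_mono ((integrable_mul_iff_of_one_le_of_le hh h_one h_le).2 hfi)
      (hfi.const_mul K) fun a => ?_
    exact mul_le_mul_of_nonneg_right (h_le a) (hf a)
  · rw [integral_undef hfi,
      integral_undef (by rwa [integrable_mul_iff_of_one_le_of_le hh h_one h_le])]
    simp

end IntegralBounds

theorem csSup_image_le_mul_csSup_image {β : Type*} {A : Set β} (hA : A.Nonempty) {f g : β → ℝ}
    {K : ℝ} (hK : 0 ≤ K) (hfg : ∀ a ∈ A, f a ≤ g a) (hgf : ∀ a ∈ A, g a ≤ K * f a) :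
    sSup (g '' A) ≤ K * sSup (f '' A) := by
  by_cases hf : BddAbove (f '' A)
  · refine csSup_le (hA.image g) ?_
    rintro _ ⟨a, ha, rfl⟩
    exact (hgf a ha).trans (mul_le_mul_of_nonneg_left (le_csSup hf ⟨a, ha, rfl⟩) hK)
  · have hg : ¬ BddAbove (g '' A) := fun ⟨M, hM⟩ =>
      hf ⟨M, by rintro _ ⟨a, ha, rfl⟩; exact (hfg a ha).trans (hM ⟨a, ha, rfl⟩)⟩
    simp [Real.sSup_of_not_bddAbove hf, Real.sSup_of_not_bddAbove hg]

theorem bridge_le_bridge {Ω : Type*} (W : ℝ → Ω → ℝ) {t x x' s : ℝ} (ht : t < 1) (hs : s ≤ 1)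
    (hx : x ≤ x') (ω : Ω) : bridge W t x s ω ≤ bridge W t x' s ω := by
  unfold bridge
  gcongr

theorem natSigma_le {W : ℝ → Ω → ℝ} (hW : ∀ u, Measurable (W u)) (s : ℝ) :
    natSigma W s ≤ ‹MeasurableSpace Ω› :=
  iSup₂_le fun u _ => (hW u).comap_le

theorem isStoppingTimeFor_const {Ω : Type*} (W : ℝ → Ω → ℝ) (c : ℝ) :
    IsStoppingTimeFor W fun _ => c :=
  fun _ => MeasurableSet.const _

theorem IsStoppingTimeFor.measurable {W : ℝ → Ω → ℝ} {τ : Ω → ℝ}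
    (hW : ∀ u, Measurable (W u)) (hτ : IsStoppingTimeFor W τ) : Measurable τ :=
  measurable_of_Iic fun s => natSigma_le hW s _ (hτ s)

def stoppingRules {Ω : Type*} (W : ℝ → Ω → ℝ) (t : ℝ) : Set (Ω → ℝ) :=
  {τ | IsStoppingTimeFor W (fun ω => t + τ ω) ∧ ∀ ω, τ ω ∈ Icc 0 (1 - t)}

def payoff (μ : Measure Ω) (W : ℝ → Ω → ℝ) (t x : ℝ) (τ : Ω → ℝ) : ℝ :=
  ∫ ω, exp (Zproc W t x (t + τ ω) ω) ∂μ

theorem value_eq_sSup_image (μ : Measure Ω) (W : ℝ → Ω → ℝ) (t x : ℝ) :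
    value μ W t x = sSup (payoff μ W t x '' stoppingRules W t) := by
  unfold value
  congr 1
  ext r
  simp only [mem_ofPred_eq, mem_image, stoppingRules, payoff, and_assoc, eq_comm]

theorem zero_mem_stoppingRules {Ω : Type*} (W : ℝ → Ω → ℝ) {t : ℝ} (ht : t ≤ 1) :
    (fun _ => 0) ∈ stoppingRules W t :=
  ⟨isStoppingTimeFor_const W _, fun _ => ⟨le_rfl, by linarith⟩⟩

theorem Zproc_eq_add {Ω : Type*} (W : ℝ → Ω → ℝ) (t x x' s : ℝ) (ω : Ω) :
    Zproc W t x' s ω = (1 - s) / (1 - t) * (x' - x) + Zproc W t x s ω := by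
  unfold Zproc
  ring

section Payoff

variable {μ : Measure Ω} {W : ℝ → Ω → ℝ} {t : ℝ} {τ : Ω → ℝ}

theorem payoff_eq_integral_mul (x x' : ℝ) :
    payoff μ W t x' τ =
      ∫ ω, exp ((1 - (t + τ ω)) / (1 - t) * (x' - x)) * exp (Zproc W t x (t + τ ω) ω) ∂μ := by
  simp only [payoff, Zproc_eq_add W t x x', exp_add]

theorem payoff_mono_and_le_exp_mul (hW : ∀ u, Measurable (W u)) (ht : t < 1)
    {x x' : ℝ} (hτ : τ ∈ stoppingRules W t) (hx : x ≤ x') :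
    payoff μ W t x τ ≤ payoff μ W t x' τ ∧
      payoff μ W t x' τ ≤ exp (x' - x) * payoff μ W t x τ := by
  obtain ⟨hτ_stop, hτ_mem⟩ := hτ
  have hτm : Measurable τ := by
    simpa using (hτ_stop.measurable hW).sub_const t
  have h1t : 0 < 1 - t := by linarith
  have hc0 : ∀ ω, 0 ≤ (1 - (t + τ ω)) / (1 - t) * (x' - x) := fun ω =>
    mul_nonneg (div_nonneg (by linarith [(hτ_mem ω).2]) h1t.le) (by linarith)
  have hc1 : ∀ ω, (1 - (t + τ ω)) / (1 - t) * (x' - x) ≤ x' - x := fun ω =>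
    mul_le_of_le_one_left (by linarith)
      ((div_le_one h1t).2 (by linarith [(hτ_mem ω).1]))
  have hh : AEStronglyMeasurable
      (fun ω => exp ((1 - (t + τ ω)) / (1 - t) * (x' - x))) μ := by
    fun_prop
  have h_one : ∀ ω, 1 ≤ exp ((1 - (t + τ ω)) / (1 - t) * (x' - x)) := fun ω =>
    one_le_exp (hc0 ω)
  have h_le : ∀ ω, exp ((1 - (t + τ ω)) / (1 - t) * (x' - x)) ≤ exp (x' - x) := fun ω =>
    exp_le_exp.2 (hc1 ω)
  rw [payoff_eq_integral_mul x x']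
  exact ⟨integral_le_integral_mul_of_one_le hh h_one h_le fun _ => (exp_pos _).le,
    integral_mul_le_mul_integral hh h_one h_le fun _ => (exp_pos _).le⟩

end Payoff

theorem value_le_exp_mul_value {μ : Measure Ω} {W : ℝ → Ω → ℝ} (hW : ∀ u, Measurable (W u))
    {t x x' : ℝ} (ht : t < 1) (hx : x ≤ x') :
    value μ W t x' ≤ exp (x' - x) * value μ W t x := by
  rw [value_eq_sSup_image, value_eq_sSup_image]
  exact csSup_image_le_mul_csSup_image ⟨_, zero_mem_stoppingRules W ht.le⟩ (exp_pos _).le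
    (fun _ hτ => (payoff_mono_and_le_exp_mul hW ht hτ hx).1)
    (fun _ hτ => (payoff_mono_and_le_exp_mul hW ht hτ hx).2)

/-- pathwise comparison `X^{t,x}_s ≤ X^{t,x'}_s` for `x ≤ x'` (same driving
Brownian motion), and consequently `x ↦ e^{-x} v(t,x)` is non-increasing. -/
theorem bridge_comparison_and_tilde_antitone
    {Ω : Type*} [MeasurableSpace Ω] (μ : Measure Ω) (W : ℝ → Ω → ℝ)
    (hW : IsBrownianMotion μ W) (t : ℝ) (ht : t ∈ Set.Ico (0:ℝ) 1) :
    (∀ x x' : ℝ, x ≤ x' →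
      ∀ᵐ ω ∂μ, ∀ s ∈ Set.Icc t 1, bridge W t x s ω ≤ bridge W t x' s ω) ∧
    Antitone (fun x : ℝ => Real.exp (-x) * value μ W t x) := by
  refine ⟨fun x x' hx => .of_forall fun ω s hs => bridge_le_bridge W ht.2 hs.2 hx ω,
    fun x x' hx => ?_⟩
  calc exp (-x') * value μ W t x'
      ≤ exp (-x') * (exp (x' - x) * value μ W t x) :=
        mul_le_mul_of_nonneg_left (value_le_exp_mul_value hW.meas ht.2 hx) (exp_pos _).le
    _ = exp (-x) * value μ W t x := by
        rw [← mul_assoc, ← exp_add]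
        ring_nf

end
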